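/- Every read-once Boolean function h on n variables satisfies ADV(h) ≥ √n. -/

import Mathlib

open scoped Matrix

/-- The spectral norm of a complex matrix. -/
noncomputable def specNorm {p q : Type*} [Fintype p] [Fintype q] [DecidableEq q]
    (A : Matrix p q ℂ) : ℝ :=
  ‖LinearMap.toContinuousLinearMap (Matrix.toEuclideanLin A)‖

/-- The zero-one matrix `D_i` with `D_i[x,y] = 1` iff `x_i ≠ y_i`. -/
def Dmat {I : Type*} (i : I) : Matrix (I → Bool) (I → Bool) ℂ :=
  Matrix.of fun x y => if x i ≠ y i then 1 else 0

/-- The nonnegative adversary bound `ADV(g)`: the supremum over nonzero adversary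
matrices `Γ` with real nonnegative entries of `‖Γ‖ / max_i ‖Γ ∘ D_i‖`. -/
noncomputable def ADV {I : Type*} [Fintype I] [DecidableEq I]
    (g : (I → Bool) → Bool) : ℝ :=
  sSup { r : ℝ | ∃ Γ : Matrix (I → Bool) (I → Bool) ℂ, Γ.IsHermitian ∧
    (∀ x y, g x = g y → Γ x y = 0) ∧
    (∀ x y, ∃ t : ℝ, 0 ≤ t ∧ Γ x y = (t : ℂ)) ∧ Γ ≠ 0 ∧
    r = specNorm Γ / ⨆ i : I, specNorm (Γ ⊙ Dmat i) }

/-- Read-once Boolean functions: a single (possibly negated) variable is read-once,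
and the AND or OR of two read-once functions on disjoint sets of variables is
read-once. -/
inductive ReadOnce : ∀ (I : Type) [Fintype I], ((I → Bool) → Bool) → Prop
  | var : ReadOnce Unit (fun x => x ())
  | negvar : ReadOnce Unit (fun x => !x ())
  | and {I₁ I₂ : Type} [Fintype I₁] [Fintype I₂]
      {g₁ : (I₁ → Bool) → Bool} {g₂ : (I₂ → Bool) → Bool} :
      ReadOnce I₁ g₁ → ReadOnce I₂ g₂ →
      ReadOnce (I₁ ⊕ I₂)
        (fun x => g₁ (fun i => x (Sum.inl i)) && g₂ (fun i => x (Sum.inr i)))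
  | or {I₁ I₂ : Type} [Fintype I₁] [Fintype I₂]
      {g₁ : (I₁ → Bool) → Bool} {g₂ : (I₂ → Bool) → Bool} :
      ReadOnce I₁ g₁ → ReadOnce I₂ g₂ →
      ReadOnce (I₁ ⊕ I₂)
        (fun x => g₁ (fun i => x (Sum.inl i)) || g₂ (fun i => x (Sum.inr i)))


set_option linter.unusedSectionVars false
set_option maxHeartbeats 1600000

section NormLemmas
variable {p : Type*} [Fintype p] [DecidableEq p]

lemma specNorm_nonneg (A : Matrix p p ℂ) : 0 ≤ specNorm A := norm_nonneg _

lemma norm_toEuc (A : Matrix p p ℂ) (u : p → ℂ) :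
    ‖(LinearMap.toContinuousLinearMap (Matrix.toEuclideanLin A))
      ((WithLp.equiv 2 (p → ℂ)).symm u)‖
      = Real.sqrt (∑ x, ‖A.mulVec u x‖ ^ 2) := by
  rw [LinearMap.coe_toContinuousLinearMap', Matrix.toEuclideanLin_apply]
  rw [EuclideanSpace.norm_eq]
  simp

lemma norm_euc (u : p → ℂ) :
    ‖((WithLp.equiv 2 (p → ℂ)).symm u)‖ = Real.sqrt (∑ x, ‖u x‖ ^ 2) := by
  rw [EuclideanSpace.norm_eq]; simp

lemma le_specNorm (A : Matrix p p ℂ) (u : p → ℂ) :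
    Real.sqrt (∑ x, ‖A.mulVec u x‖ ^ 2) ≤
      specNorm A * Real.sqrt (∑ x, ‖u x‖ ^ 2) := by
  have := (LinearMap.toContinuousLinearMap (Matrix.toEuclideanLin A)).le_opNorm
    ((WithLp.equiv 2 (p → ℂ)).symm u)
  rwa [norm_toEuc, norm_euc] at this

lemma specNorm_le_of_bound (A : Matrix p p ℂ) (C : ℝ) (hC : 0 ≤ C)
    (h : ∀ u : p → ℂ, Real.sqrt (∑ x, ‖A.mulVec u x‖ ^ 2) ≤
      C * Real.sqrt (∑ x, ‖u x‖ ^ 2)) : specNorm A ≤ C := by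
  apply ContinuousLinearMap.opNorm_le_bound _ hC
  intro v
  have hv : v = (WithLp.equiv 2 (p → ℂ)).symm ((WithLp.equiv 2 (p → ℂ)) v) := rfl
  rw [hv, norm_toEuc, norm_euc]
  exact h _

/-- matching bound -/
lemma specNorm_le_one_of_matching (A : Matrix p p ℂ) (σ : Equiv.Perm p)
    (h0 : ∀ x y, A x y ≠ 0 → y = σ x) (h1 : ∀ x y, ‖A x y‖ ≤ 1) :
    specNorm A ≤ 1 := by
  apply specNorm_le_of_bound _ _ zero_le_one
  intro u
  rw [one_mul]
  apply Real.sqrt_le_sqrt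
  have key : ∀ x, ‖A.mulVec u x‖ ^ 2 ≤ ‖u (σ x)‖ ^ 2 := by
    intro x
    have : A.mulVec u x = A x (σ x) * u (σ x) := by
      rw [Matrix.mulVec, dotProduct]
      refine Finset.sum_eq_single (σ x) (fun y _ hy => ?_) (by simp)
      by_cases hA : A x y = 0
      · simp [hA]
      · exact absurd (h0 x y hA) hy
    rw [this]
    have := norm_mul_le (A x (σ x)) (u (σ x))
    have h2 : ‖A x (σ x) * u (σ x)‖ ≤ ‖u (σ x)‖ := by
      calc ‖A x (σ x) * u (σ x)‖ = ‖A x (σ x)‖ * ‖u (σ x)‖ := norm_mul _ _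
      _ ≤ 1 * ‖u (σ x)‖ := by
          exact mul_le_mul_of_nonneg_right (h1 x (σ x)) (norm_nonneg _)
      _ = ‖u (σ x)‖ := one_mul _
    exact pow_le_pow_left₀ (norm_nonneg _) h2 2
  calc ∑ x, ‖A.mulVec u x‖ ^ 2 ≤ ∑ x, ‖u (σ x)‖ ^ 2 := Finset.sum_le_sum fun x _ => key x
  _ = ∑ x, ‖u x‖ ^ 2 := Equiv.sum_comp σ (fun x => ‖u x‖ ^ 2)

/-- domination -/
lemma specNorm_le_of_dom (A : Matrix p p ℂ) (Br : Matrix p p ℝ)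
    (h : ∀ x y, ‖A x y‖ ≤ Br x y) :
    specNorm A ≤ specNorm (Br.map (fun t => (t : ℂ))) := by
  set B := Br.map (fun t => (t : ℂ)) with hB
  apply specNorm_le_of_bound _ _ (specNorm_nonneg _)
  intro u
  set u' : p → ℂ := fun y => (‖u y‖ : ℂ) with hu'
  have h1 : ∀ x, ‖A.mulVec u x‖ ≤ ‖B.mulVec u' x‖ := by
    intro x
    have he : B.mulVec u' x = ((∑ y, Br x y * ‖u y‖ : ℝ) : ℂ) := by
      rw [Matrix.mulVec, dotProduct]
      push_cast
      rfl
    have hnn : (0:ℝ) ≤ ∑ y, Br x y * ‖u y‖ := by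
      apply Finset.sum_nonneg
      intro y _
      exact mul_nonneg ((norm_nonneg (A x y)).trans (h x y)) (norm_nonneg _)
    rw [he]
    rw [Complex.norm_real, Real.norm_eq_abs, abs_of_nonneg hnn]
    calc ‖A.mulVec u x‖ ≤ ∑ y, ‖A x y * u y‖ := norm_sum_le _ _
    _ ≤ ∑ y, Br x y * ‖u y‖ := by
        apply Finset.sum_le_sum
        intro y _
        rw [norm_mul]
        exact mul_le_mul_of_nonneg_right (h x y) (norm_nonneg _)
  have h2 : Real.sqrt (∑ x, ‖A.mulVec u x‖ ^ 2) ≤ Real.sqrt (∑ x, ‖B.mulVec u' x‖ ^ 2) := by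
    apply Real.sqrt_le_sqrt
    exact Finset.sum_le_sum fun x _ => pow_le_pow_left₀ (norm_nonneg _) (h1 x) 2
  have h3 := le_specNorm B u'
  have h4 : (∑ x, ‖u' x‖ ^ 2) = ∑ x, ‖u x‖ ^ 2 := by
    apply Finset.sum_congr rfl
    intro x _
    simp [hu']
  rw [h4] at h3
  exact h2.trans h3

/-- entry lower bound -/
lemma entry_le_specNorm (A : Matrix p p ℂ) (x y : p) : ‖A x y‖ ≤ specNorm A := by
  have h := le_specNorm A (Pi.single y 1)
  have h1 : ∀ x' : p, A.mulVec (Pi.single y 1) x' = A x' y := by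
    intro x'
    rw [Matrix.mulVec, dotProduct]
    rw [Finset.sum_eq_single y (fun b _ hb => by simp [Pi.single_apply, hb]) (by simp)]
    simp
  have h2 : (∑ x' : p, ‖(Pi.single y 1 : p → ℂ) x'‖ ^ 2) = 1 := by
    have : ∀ x' : p, ‖(Pi.single y 1 : p → ℂ) x'‖ ^ 2 = if x' = y then 1 else 0 := by
      intro x'
      by_cases hx : x' = y <;> simp [Pi.single_apply, hx]
    rw [Finset.sum_congr rfl fun x' _ => this x']
    simp
  rw [h2, Real.sqrt_one, mul_one] at h
  refine le_trans ?_ h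
  rw [show (∑ x' : p, ‖A.mulVec (Pi.single y 1) x'‖ ^ 2) = ∑ x' : p, ‖A x' y‖ ^ 2 from
    Finset.sum_congr rfl fun x' _ => by rw [h1]]
  have : ‖A x y‖ ^ 2 ≤ ∑ x' : p, ‖A x' y‖ ^ 2 :=
    Finset.single_le_sum (f := fun x' : p => ‖A x' y‖ ^ 2)
      (fun i _ => sq_nonneg _) (Finset.mem_univ x)
  calc ‖A x y‖ = Real.sqrt (‖A x y‖ ^ 2) := (Real.sqrt_sq (norm_nonneg _)).symm
  _ ≤ _ := Real.sqrt_le_sqrt this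

/-- subadditivity over finset sums -/
lemma specNorm_sum_le {ι : Type*} (s : Finset ι) (M : ι → Matrix p p ℂ) :
    specNorm (∑ i ∈ s, M i) ≤ ∑ i ∈ s, specNorm (M i) := by
  unfold specNorm
  rw [map_sum, map_sum]
  exact norm_sum_le _ _

end NormLemmas

/-- `x` and `y` differ in exactly one coordinate. -/
def OneDiff {I : Type*} (x y : I → Bool) : Prop :=
  ∃ i, x i ≠ y i ∧ ∀ j, j ≠ i → x j = y j

/-- The inductive invariant. -/
def AdvInv (I : Type) [Fintype I] [DecidableEq I] (g : (I → Bool) → Bool) : Prop :=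
  ∃ (Γ : Matrix (I → Bool) (I → Bool) ℝ) (v : (I → Bool) → ℝ) (Λ : ℝ),
    (∀ x y, Γ x y = Γ y x) ∧
    (∀ x y, 0 ≤ Γ x y) ∧
    (∀ x y, Γ x y ≤ 1) ∧
    (∀ x y, g x = g y → Γ x y = 0) ∧
    (∀ x y, Γ x y ≠ 0 → OneDiff x y) ∧
    (∀ x, 0 ≤ v x) ∧
    Γ.mulVec v = Λ • v ∧
    0 < Λ ∧
    Real.sqrt (Fintype.card I) ≤ Λ ∧
    (∑ x, (if g x = true then v x ^ 2 else 0)) = 1/2 ∧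
    (∑ x, (if g x = false then v x ^ 2 else 0)) = 1/2

lemma advInv_irrel {I : Type} [Fintype I] {d₁ d₂ : DecidableEq I}
    {g : (I → Bool) → Bool} (h : @AdvInv I _ d₁ g) : @AdvInv I _ d₂ g := by
  rwa [Subsingleton.elim d₂ d₁]

lemma advInv_neg {I : Type} [Fintype I] [DecidableEq I] {g : (I → Bool) → Bool}
    (h : AdvInv I g) : AdvInv I (fun x => !g x) := by
  obtain ⟨Γ, v, Λ, hsym, hnn, hle1, hzero, hone, hvnn, heig, hΛpos, hΛge, hm1, hm0⟩ := h
  refine ⟨Γ, v, Λ, hsym, hnn, hle1, ?_, hone, hvnn, heig, hΛpos, hΛge, ?_, ?_⟩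
  · intro x y hxy
    exact hzero x y (by simpa using hxy)
  · rw [← hm0]
    exact Finset.sum_congr rfl fun x _ => by cases hgx : g x <;> simp [hgx]
  · rw [← hm1]
    exact Finset.sum_congr rfl fun x _ => by cases hgx : g x <;> simp [hgx]

lemma advInv_var : AdvInv Unit (fun x => x ()) := by
  refine ⟨Matrix.of fun x y => if x = y then 0 else 1, fun _ => (Real.sqrt 2)⁻¹, 1,
    ?_, ?_, ?_, ?_, ?_, ?_, ?_, one_pos, ?_, ?_, ?_⟩
  · intro x y
    by_cases hxy : x = y <;> simp [Matrix.of_apply, hxy, eq_comm]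
  · intro x y; by_cases hxy : x = y <;> simp [Matrix.of_apply, hxy]
  · intro x y; by_cases hxy : x = y <;> simp [Matrix.of_apply, hxy]
  · intro x y hxy
    have : x = y := funext fun u => by cases u; exact hxy
    simp [Matrix.of_apply, this]
  · intro x y hxy
    have hne : x ≠ y := by
      intro h; rw [h] at hxy; simp [Matrix.of_apply] at hxy
    refine ⟨(), ?_, ?_⟩
    · intro h
      exact hne (funext fun u => by cases u; exact h)
    · intro j hj
      exact absurd (by cases j; rfl) hj
  · intro x; positivity
  · funext x
    have hcard : ∀ x : Unit → Bool, (Finset.univ.filter (fun y : Unit → Bool => ¬ x = y)).card = 1 := by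
      decide
    rw [Matrix.mulVec, dotProduct]
    simp only [Matrix.of_apply, ite_mul, zero_mul, one_mul]
    rw [Finset.sum_ite]
    simp [hcard x]
  · simp [Fintype.card_unit]
  · have h2 : ((Real.sqrt 2)⁻¹ : ℝ)^2 = 1/2 := by
      rw [inv_pow, Real.sq_sqrt (by norm_num : (0:ℝ) ≤ 2)]; norm_num
    rw [show (Finset.univ : Finset (Unit → Bool)) = {fun _ => true, fun _ => false} from by decide]
    rw [Finset.sum_insert (by decide), Finset.sum_singleton]
    simp [h2]
  · have h2 : ((Real.sqrt 2)⁻¹ : ℝ)^2 = 1/2 := by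
      rw [inv_pow, Real.sq_sqrt (by norm_num : (0:ℝ) ≤ 2)]; norm_num
    rw [show (Finset.univ : Finset (Unit → Bool)) = {fun _ => true, fun _ => false} from by decide]
    rw [Finset.sum_insert (by decide), Finset.sum_singleton]
    simp [h2]

section AndLemma

variable {I₁ I₂ : Type} [Fintype I₁] [Fintype I₂] [DecidableEq I₁] [DecidableEq I₂]

lemma sum_sumArrow (F : (I₁ ⊕ I₂ → Bool) → ℝ) :
    ∑ x : I₁ ⊕ I₂ → Bool, F x
      = ∑ a : I₁ → Bool, ∑ b : I₂ → Bool, F (Sum.elim a b) := by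
  calc ∑ x : I₁ ⊕ I₂ → Bool, F x
      = ∑ p : (I₁ → Bool) × (I₂ → Bool), F (Sum.elim p.1 p.2) := by
        refine Fintype.sum_equiv (Equiv.sumArrowEquivProdArrow I₁ I₂ Bool) F
          (fun p => F (Sum.elim p.1 p.2)) (fun x => ?_)
        exact congrArg F (funext fun s => by cases s <;> rfl)
  _ = ∑ a : I₁ → Bool, ∑ b : I₂ → Bool, F (Sum.elim a b) :=
        Fintype.sum_prod_type _

@[simp] lemma res1_elim (a : I₁ → Bool) (b : I₂ → Bool) :
    (fun i => Sum.elim a b (Sum.inl i)) = a := rfl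

@[simp] lemma res2_elim (a : I₁ → Bool) (b : I₂ → Bool) :
    (fun i => Sum.elim a b (Sum.inr i)) = b := rfl

lemma advInv_and {g₁ : (I₁ → Bool) → Bool} {g₂ : (I₂ → Bool) → Bool}
    (h₁ : AdvInv I₁ g₁) (h₂ : AdvInv I₂ g₂) :
    AdvInv (I₁ ⊕ I₂)
      (fun x => g₁ (fun i => x (Sum.inl i)) && g₂ (fun i => x (Sum.inr i))) := by
  obtain ⟨Γ₁, v₁, Λ₁, hsym₁, hnn₁, hle₁, hzero₁, hone₁, hvnn₁, heig₁, hΛpos₁, hΛge₁, hm₁t, hm₁f⟩ := h₁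
  obtain ⟨Γ₂, v₂, Λ₂, hsym₂, hnn₂, hle₂, hzero₂, hone₂, hvnn₂, heig₂, hΛpos₂, hΛge₂, hm₂t, hm₂f⟩ := h₂
  set Λ : ℝ := Real.sqrt (Λ₁^2 + Λ₂^2) with hΛdef
  have hΛpos : 0 < Λ := Real.sqrt_pos.2 (by positivity)
  have hΛsq : Λ^2 = Λ₁^2 + Λ₂^2 := Real.sq_sqrt (by positivity)
  have hΛne : Λ ≠ 0 := ne_of_gt hΛpos
  have hsq2 : Real.sqrt 2 ^ 2 = 2 := Real.sq_sqrt (by norm_num)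
  set c : Bool → Bool → ℝ :=
    fun b₁ b₂ => if b₁ then (if b₂ then 1 else Λ₂/Λ) else (if b₂ then Λ₁/Λ else 0)
    with hcdef
  have hcnn : ∀ b₁ b₂, 0 ≤ c b₁ b₂ := by
    intro b₁ b₂
    cases b₁ <;> cases b₂ <;> simp [hcdef] <;> positivity
  -- filtered eigenvalue identities
  have heig₁' : ∀ a : I₁ → Bool, ∑ a' : I₁ → Bool, Γ₁ a a' * v₁ a' = Λ₁ * v₁ a := by
    intro a
    have := congrFun heig₁ a
    simpa [Matrix.mulVec, dotProduct] using this
  have heig₂' : ∀ b : I₂ → Bool, ∑ b' : I₂ → Bool, Γ₂ b b' * v₂ b' = Λ₂ * v₂ b := by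
    intro b
    have := congrFun heig₂ b
    simpa [Matrix.mulVec, dotProduct] using this
  have key₁ : ∀ (p : I₁ → Bool) (K : Bool → ℝ),
      ∑ a : I₁ → Bool, Γ₁ p a * (v₁ a * K (g₁ a)) = K (!(g₁ p)) * (Λ₁ * v₁ p) := by
    intro p K
    rw [← heig₁' p, Finset.mul_sum]
    refine Finset.sum_congr rfl fun a _ => ?_
    by_cases hg : g₁ a = g₁ p
    · rw [hzero₁ p a hg.symm]; ring
    · have : g₁ a = !(g₁ p) := by
        cases hga : g₁ a <;> cases hgp : g₁ p <;> simp_all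
      rw [this]; ring
  have key₂ : ∀ (q : I₂ → Bool) (K : Bool → ℝ),
      ∑ b : I₂ → Bool, Γ₂ q b * (v₂ b * K (g₂ b)) = K (!(g₂ q)) * (Λ₂ * v₂ q) := by
    intro q K
    rw [← heig₂' q, Finset.mul_sum]
    refine Finset.sum_congr rfl fun b _ => ?_
    by_cases hg : g₂ b = g₂ q
    · rw [hzero₂ q b hg.symm]; ring
    · have : g₂ b = !(g₂ q) := by
        cases hgb : g₂ b <;> cases hgq : g₂ q <;> simp_all
      rw [this]; ring
  -- the main eigen computation, abstracted
  have key : ∀ (p : I₁ → Bool) (q : I₂ → Bool),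
      (∑ a : I₁ → Bool, ∑ b : I₂ → Bool,
        ((Γ₁ p a * (if (q = b ∧ g₂ q = true) then (1:ℝ) else 0)
          + (if (p = a ∧ g₁ p = true) then (1:ℝ) else 0) * Γ₂ q b) *
         (Real.sqrt 2 * (v₁ a * v₂ b * c (g₁ a) (g₂ b)))))
      = Λ * (Real.sqrt 2 * (v₁ p * v₂ q * c (g₁ p) (g₂ q))) := by
    intro p q
    have split : ∀ a : I₁ → Bool, ∀ b : I₂ → Bool,
        ((Γ₁ p a * (if (q = b ∧ g₂ q = true) then (1:ℝ) else 0)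
          + (if (p = a ∧ g₁ p = true) then (1:ℝ) else 0) * Γ₂ q b) *
         (Real.sqrt 2 * (v₁ a * v₂ b * c (g₁ a) (g₂ b))))
        = (if (q = b ∧ g₂ q = true) then
             Γ₁ p a * (Real.sqrt 2 * (v₁ a * v₂ b * c (g₁ a) (g₂ b))) else 0)
          + (if (p = a ∧ g₁ p = true) then
             Γ₂ q b * (Real.sqrt 2 * (v₁ a * v₂ b * c (g₁ a) (g₂ b))) else 0) := by
      intro a b
      by_cases h1 : (q = b ∧ g₂ q = true) <;> by_cases h2 : (p = a ∧ g₁ p = true)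
      · simp only [if_pos h1, if_pos h2]; ring
      · simp only [if_pos h1, if_neg h2]; ring
      · simp only [if_neg h1, if_pos h2]; ring
      · simp only [if_neg h1, if_neg h2]; ring
    simp only [split, Finset.sum_add_distrib]
    -- first double sum
    have S1 : (∑ a : I₁ → Bool, ∑ b : I₂ → Bool,
        (if (q = b ∧ g₂ q = true) then
          Γ₁ p a * (Real.sqrt 2 * (v₁ a * v₂ b * c (g₁ a) (g₂ b))) else 0))
        = (if g₂ q = true then
            (Real.sqrt 2 * v₂ q * c (!(g₁ p)) (g₂ q)) * (Λ₁ * v₁ p) else 0) := by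
      by_cases hq : g₂ q = true
      · rw [if_pos hq]
        have inner : ∀ a : I₁ → Bool, (∑ b : I₂ → Bool,
            (if (q = b ∧ g₂ q = true) then
              Γ₁ p a * (Real.sqrt 2 * (v₁ a * v₂ b * c (g₁ a) (g₂ b))) else 0))
            = Γ₁ p a * (v₁ a * (Real.sqrt 2 * v₂ q * c (g₁ a) (g₂ q))) := by
          intro a
          have e : ∀ b : I₂ → Bool, (if (q = b ∧ g₂ q = true) then
              Γ₁ p a * (Real.sqrt 2 * (v₁ a * v₂ b * c (g₁ a) (g₂ b))) else 0)
              = (if q = b then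
                Γ₁ p a * (Real.sqrt 2 * (v₁ a * v₂ b * c (g₁ a) (g₂ b))) else 0) := by
            intro b
            by_cases hb : q = b
            · rw [if_pos ⟨hb, hq⟩, if_pos hb]
            · rw [if_neg (fun hc => hb hc.1), if_neg hb]
          rw [Finset.sum_congr rfl fun b _ => e b, Finset.sum_ite_eq,
            if_pos (Finset.mem_univ q)]
          ring
        rw [Finset.sum_congr rfl fun a _ => inner a]
        exact key₁ p (fun t => Real.sqrt 2 * v₂ q * c t (g₂ q))
      · rw [if_neg hq]
        apply Finset.sum_eq_zero; intro a _
        apply Finset.sum_eq_zero; intro b _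
        rw [if_neg (fun hc => hq hc.2)]
    have S2 : (∑ a : I₁ → Bool, ∑ b : I₂ → Bool,
        (if (p = a ∧ g₁ p = true) then
          Γ₂ q b * (Real.sqrt 2 * (v₁ a * v₂ b * c (g₁ a) (g₂ b))) else 0))
        = (if g₁ p = true then
            (Real.sqrt 2 * v₁ p * c (g₁ p) (!(g₂ q))) * (Λ₂ * v₂ q) else 0) := by
      by_cases hp : g₁ p = true
      · rw [if_pos hp]
        have outer : ∀ a : I₁ → Bool, (∑ b : I₂ → Bool,
            (if (p = a ∧ g₁ p = true) then
              Γ₂ q b * (Real.sqrt 2 * (v₁ a * v₂ b * c (g₁ a) (g₂ b))) else 0))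
            = (if p = a then
                (∑ b : I₂ → Bool,
                  Γ₂ q b * (v₂ b * (Real.sqrt 2 * v₁ a * c (g₁ a) (g₂ b)))) else 0) := by
          intro a
          by_cases ha : p = a
          · rw [if_pos ha]
            refine Finset.sum_congr rfl fun b _ => ?_
            rw [if_pos ⟨ha, hp⟩]
            ring
          · rw [if_neg ha]
            apply Finset.sum_eq_zero; intro b _
            rw [if_neg (fun hc => ha hc.1)]
        rw [Finset.sum_congr rfl fun a _ => outer a, Finset.sum_ite_eq,
          if_pos (Finset.mem_univ p)]
        exact key₂ q (fun t => Real.sqrt 2 * v₁ p * c (g₁ p) t)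
      · rw [if_neg hp]
        apply Finset.sum_eq_zero; intro a _
        apply Finset.sum_eq_zero; intro b _
        rw [if_neg (fun hc => hp hc.2)]
    rw [S1, S2]
    by_cases hp : g₁ p = true <;> by_cases hq : g₂ q = true
    · rw [if_pos hp, if_pos hq, hp, hq]
      simp only [Bool.not_true, hcdef]
      norm_num
      field_simp
      linear_combination (-(v₂ q * v₁ p)) * hΛsq
    · rw [if_pos hp, if_neg hq, hp]
      have hq' : g₂ q = false := by simpa using hq
      rw [hq']
      simp only [Bool.not_false, hcdef]
      norm_num
      field_simp
    · rw [if_neg hp, if_pos hq, hq]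
      have hp' : g₁ p = false := by simpa using hp
      rw [hp']
      simp only [Bool.not_false, hcdef]
      norm_num
      field_simp
    · rw [if_neg hp, if_neg hq]
      have hp' : g₁ p = false := by simpa using hp
      have hq' : g₂ q = false := by simpa using hq
      rw [hp', hq']
      simp [hcdef]
  refine ⟨Matrix.of fun x y =>
      Γ₁ (fun i => x (Sum.inl i)) (fun i => y (Sum.inl i)) *
        (if ((fun i => x (Sum.inr i)) = (fun i => y (Sum.inr i))
            ∧ g₂ (fun i => x (Sum.inr i)) = true) then 1 else 0)
      + (if ((fun i => x (Sum.inl i)) = (fun i => y (Sum.inl i))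
            ∧ g₁ (fun i => x (Sum.inl i)) = true) then 1 else 0) *
        Γ₂ (fun i => x (Sum.inr i)) (fun i => y (Sum.inr i)),
    fun x => Real.sqrt 2 * (v₁ (fun i => x (Sum.inl i)) * v₂ (fun i => x (Sum.inr i)) *
      c (g₁ (fun i => x (Sum.inl i))) (g₂ (fun i => x (Sum.inr i)))),
    Λ, ?_, ?_, ?_, ?_, ?_, ?_, ?_, hΛpos, ?_, ?_, ?_⟩
  -- symmetry
  · intro x y
    simp only [Matrix.of_apply]
    congr 1
    · by_cases h2 : (fun i => x (Sum.inr i)) = (fun i => y (Sum.inr i))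
      · rw [h2, hsym₁]
      · rw [if_neg (fun hc => h2 hc.1), if_neg (fun hc => h2 hc.1.symm), mul_zero, mul_zero]
    · by_cases h1 : (fun i => x (Sum.inl i)) = (fun i => y (Sum.inl i))
      · rw [h1, hsym₂]
      · rw [if_neg (fun hc => h1 hc.1), if_neg (fun hc => h1 hc.1.symm), zero_mul, zero_mul]
  -- nonneg
  · intro x y
    simp only [Matrix.of_apply]
    have t1 : (0:ℝ) ≤ Γ₁ (fun i => x (Sum.inl i)) (fun i => y (Sum.inl i)) := hnn₁ _ _
    have t2 : (0:ℝ) ≤ Γ₂ (fun i => x (Sum.inr i)) (fun i => y (Sum.inr i)) := hnn₂ _ _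
    apply add_nonneg
    · exact mul_nonneg t1 (by positivity)
    · exact mul_nonneg (by positivity) t2
  -- ≤ 1
  · intro x y
    simp only [Matrix.of_apply]
    by_cases h1 : (fun i => x (Sum.inl i)) = (fun i => y (Sum.inl i))
    · have hz : Γ₁ (fun i => x (Sum.inl i)) (fun i => y (Sum.inl i)) = 0 :=
        hzero₁ _ _ (by rw [h1])
      rw [hz, zero_mul, zero_add]
      calc (if ((fun i => x (Sum.inl i)) = (fun i => y (Sum.inl i))
            ∧ g₁ (fun i => x (Sum.inl i)) = true) then (1:ℝ) else 0) *
            Γ₂ (fun i => x (Sum.inr i)) (fun i => y (Sum.inr i))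
          ≤ 1 * 1 := by
            apply mul_le_mul ?_ (hle₂ _ _) (hnn₂ _ _) zero_le_one
            split <;> norm_num
      _ = 1 := by norm_num
    · rw [if_neg (show ¬(((fun i => x (Sum.inl i)) = (fun i => y (Sum.inl i)))
          ∧ g₁ (fun i => x (Sum.inl i)) = true) from fun hc => h1 hc.1),
        zero_mul, add_zero]
      calc Γ₁ (fun i => x (Sum.inl i)) (fun i => y (Sum.inl i)) *
            (if ((fun i => x (Sum.inr i)) = (fun i => y (Sum.inr i))
              ∧ g₂ (fun i => x (Sum.inr i)) = true) then (1:ℝ) else 0)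
          ≤ 1 * 1 := by
            apply mul_le_mul (hle₁ _ _) ?_ ?_ zero_le_one
            · split <;> norm_num
            · split <;> norm_num
      _ = 1 := by norm_num
  -- adversary zero
  · intro x y hxy
    have hxy' : (g₁ (fun i => x (Sum.inl i)) && g₂ (fun i => x (Sum.inr i)))
        = (g₁ (fun i => y (Sum.inl i)) && g₂ (fun i => y (Sum.inr i))) := hxy
    simp only [Matrix.of_apply]
    have e1 : Γ₁ (fun i => x (Sum.inl i)) (fun i => y (Sum.inl i)) *
        (if ((fun i => x (Sum.inr i)) = (fun i => y (Sum.inr i))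
          ∧ g₂ (fun i => x (Sum.inr i)) = true) then (1:ℝ) else 0) = 0 := by
      by_cases hc : ((fun i => x (Sum.inr i)) = (fun i => y (Sum.inr i))
          ∧ g₂ (fun i => x (Sum.inr i)) = true)
      · obtain ⟨hc1, hc2⟩ := hc
        rw [hc1] at hxy' hc2
        rw [hc2] at hxy'
        simp only [Bool.and_true] at hxy'
        rw [hzero₁ _ _ hxy', zero_mul]
      · rw [if_neg hc, mul_zero]
    have e2 : (if ((fun i => x (Sum.inl i)) = (fun i => y (Sum.inl i))
          ∧ g₁ (fun i => x (Sum.inl i)) = true) then (1:ℝ) else 0) *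
        Γ₂ (fun i => x (Sum.inr i)) (fun i => y (Sum.inr i)) = 0 := by
      by_cases hc : ((fun i => x (Sum.inl i)) = (fun i => y (Sum.inl i))
          ∧ g₁ (fun i => x (Sum.inl i)) = true)
      · obtain ⟨hc1, hc2⟩ := hc
        rw [hc1] at hxy' hc2
        rw [hc2] at hxy'
        simp only [Bool.true_and] at hxy'
        rw [hzero₂ _ _ hxy', mul_zero]
      · rw [if_neg hc, zero_mul]
    rw [e1, e2, add_zero]
  -- OneDiff
  · intro x y hne
    simp only [Matrix.of_apply] at hne
    by_cases ht1 : Γ₁ (fun i => x (Sum.inl i)) (fun i => y (Sum.inl i)) *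
        (if ((fun i => x (Sum.inr i)) = (fun i => y (Sum.inr i))
          ∧ g₂ (fun i => x (Sum.inr i)) = true) then (1:ℝ) else 0) = 0
    · have ht2 : (if ((fun i => x (Sum.inl i)) = (fun i => y (Sum.inl i))
          ∧ g₁ (fun i => x (Sum.inl i)) = true) then (1:ℝ) else 0) *
          Γ₂ (fun i => x (Sum.inr i)) (fun i => y (Sum.inr i)) ≠ 0 := by
        intro h0
        exact hne (by rw [ht1, h0, add_zero])
      obtain ⟨hif, hΓ⟩ := mul_ne_zero_iff.1 ht2
      have hcond : ((fun i => x (Sum.inl i)) = (fun i => y (Sum.inl i))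
          ∧ g₁ (fun i => x (Sum.inl i)) = true) := by
        by_contra hc
        exact hif (if_neg hc)
      obtain ⟨j, hj, hoth⟩ := hone₂ _ _ hΓ
      refine ⟨Sum.inr j, hj, fun k hk => ?_⟩
      cases k with
      | inl k' => exact congrFun hcond.1 k'
      | inr k' => exact hoth k' (fun e => hk (by rw [e]))
    · obtain ⟨hΓ, hif⟩ := mul_ne_zero_iff.1 ht1
      have hcond : ((fun i => x (Sum.inr i)) = (fun i => y (Sum.inr i))
          ∧ g₂ (fun i => x (Sum.inr i)) = true) := by
        by_contra hc
        exact hif (if_neg hc)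
      obtain ⟨j, hj, hoth⟩ := hone₁ _ _ hΓ
      refine ⟨Sum.inl j, hj, fun k hk => ?_⟩
      cases k with
      | inl k' => exact hoth k' (fun e => hk (by rw [e]))
      | inr k' => exact congrFun hcond.1 k'
  -- v nonneg
  · intro x
    have t1 := hvnn₁ (fun i => x (Sum.inl i))
    have t2 := hvnn₂ (fun i => x (Sum.inr i))
    have t3 := hcnn (g₁ (fun i => x (Sum.inl i))) (g₂ (fun i => x (Sum.inr i)))
    positivity
  -- eigen equation
  · funext x
    rw [Matrix.mulVec, dotProduct]
    have := sum_sumArrow (I₁ := I₁) (I₂ := I₂) (fun y =>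
      (Matrix.of fun x y =>
        Γ₁ (fun i => x (Sum.inl i)) (fun i => y (Sum.inl i)) *
          (if ((fun i => x (Sum.inr i)) = (fun i => y (Sum.inr i))
              ∧ g₂ (fun i => x (Sum.inr i)) = true) then 1 else 0)
        + (if ((fun i => x (Sum.inl i)) = (fun i => y (Sum.inl i))
              ∧ g₁ (fun i => x (Sum.inl i)) = true) then 1 else 0) *
          Γ₂ (fun i => x (Sum.inr i)) (fun i => y (Sum.inr i))) x y
      * (Real.sqrt 2 * (v₁ (fun i => y (Sum.inl i)) * v₂ (fun i => y (Sum.inr i)) *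
          c (g₁ (fun i => y (Sum.inl i))) (g₂ (fun i => y (Sum.inr i))))))
    rw [this]
    simp only [Matrix.of_apply, res1_elim, res2_elim]
    refine (key (fun i => x (Sum.inl i)) (fun i => x (Sum.inr i))).trans ?_
    simp [Pi.smul_apply, smul_eq_mul]
  -- sqrt card
  · have h1 : (Fintype.card I₁ : ℝ) ≤ Λ₁^2 := by
      have h := Real.sq_sqrt (by positivity : (0:ℝ) ≤ (Fintype.card I₁ : ℝ))
      nlinarith [hΛge₁, Real.sqrt_nonneg ((Fintype.card I₁ : ℝ))]
    have h2 : (Fintype.card I₂ : ℝ) ≤ Λ₂^2 := by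
      have h := Real.sq_sqrt (by positivity : (0:ℝ) ≤ (Fintype.card I₂ : ℝ))
      nlinarith [hΛge₂, Real.sqrt_nonneg ((Fintype.card I₂ : ℝ))]
    rw [Fintype.card_sum]
    push_cast
    exact Real.sqrt_le_sqrt (by linarith)
  -- true mass
  · rw [sum_sumArrow (F := fun x =>
      if (g₁ (fun i => x (Sum.inl i)) && g₂ (fun i => x (Sum.inr i))) = true
      then (Real.sqrt 2 * (v₁ (fun i => x (Sum.inl i)) * v₂ (fun i => x (Sum.inr i)) *
        c (g₁ (fun i => x (Sum.inl i))) (g₂ (fun i => x (Sum.inr i))))) ^ 2 else 0)]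
    simp only [res1_elim, res2_elim]
    have point : ∀ (a : I₁ → Bool) (b : I₂ → Bool),
        (if (g₁ a && g₂ b) = true
          then (Real.sqrt 2 * (v₁ a * v₂ b * c (g₁ a) (g₂ b))) ^ 2 else 0)
        = (if g₁ a = true then v₁ a ^ 2 else 0) *
          (if g₂ b = true then 2 * v₂ b ^ 2 else 0) := by
      intro a b
      cases hga : g₁ a <;> cases hgb : g₂ b <;>
        simp [hga, hgb, hcdef] <;> nlinarith [hsq2]
    calc (∑ a : I₁ → Bool, ∑ b : I₂ → Bool,
        (if (g₁ a && g₂ b) = true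
          then (Real.sqrt 2 * (v₁ a * v₂ b * c (g₁ a) (g₂ b))) ^ 2 else 0))
        = ∑ a : I₁ → Bool, ∑ b : I₂ → Bool,
          (if g₁ a = true then v₁ a ^ 2 else 0) *
          (if g₂ b = true then 2 * v₂ b ^ 2 else 0) := by
          exact Finset.sum_congr rfl fun a _ => Finset.sum_congr rfl fun b _ => point a b
    _ = (∑ a : I₁ → Bool, (if g₁ a = true then v₁ a ^ 2 else 0)) *
        (∑ b : I₂ → Bool, (if g₂ b = true then 2 * v₂ b ^ 2 else 0)) :=
          (Finset.sum_mul_sum _ _ _ _).symm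
    _ = (1/2) * (2 * (1/2)) := by
          rw [hm₁t]
          congr 1
          have : (∑ b : I₂ → Bool, (if g₂ b = true then 2 * v₂ b ^ 2 else 0))
              = 2 * ∑ b : I₂ → Bool, (if g₂ b = true then v₂ b ^ 2 else 0) := by
            rw [Finset.mul_sum]
            exact Finset.sum_congr rfl fun b _ => by split <;> ring
          rw [this, hm₂t]
    _ = 1/2 := by norm_num
  -- false mass
  · rw [sum_sumArrow (F := fun x =>
      if (g₁ (fun i => x (Sum.inl i)) && g₂ (fun i => x (Sum.inr i))) = false
      then (Real.sqrt 2 * (v₁ (fun i => x (Sum.inl i)) * v₂ (fun i => x (Sum.inr i)) *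
        c (g₁ (fun i => x (Sum.inl i))) (g₂ (fun i => x (Sum.inr i))))) ^ 2 else 0)]
    simp only [res1_elim, res2_elim]
    have point : ∀ (a : I₁ → Bool) (b : I₂ → Bool),
        (if (g₁ a && g₂ b) = false
          then (Real.sqrt 2 * (v₁ a * v₂ b * c (g₁ a) (g₂ b))) ^ 2 else 0)
        = (if g₁ a = false then 2 * (Λ₁/Λ)^2 * v₁ a ^ 2 else 0) *
            (if g₂ b = true then v₂ b ^ 2 else 0)
          + (if g₁ a = true then 2 * (Λ₂/Λ)^2 * v₁ a ^ 2 else 0) *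
            (if g₂ b = false then v₂ b ^ 2 else 0) := by
      intro a b
      cases hga : g₁ a <;> cases hgb : g₂ b <;>
        simp [hga, hgb, hcdef] <;> nlinarith [hsq2]
    calc (∑ a : I₁ → Bool, ∑ b : I₂ → Bool,
        (if (g₁ a && g₂ b) = false
          then (Real.sqrt 2 * (v₁ a * v₂ b * c (g₁ a) (g₂ b))) ^ 2 else 0))
        = (∑ a : I₁ → Bool, ∑ b : I₂ → Bool,
            ((if g₁ a = false then 2 * (Λ₁/Λ)^2 * v₁ a ^ 2 else 0) *
              (if g₂ b = true then v₂ b ^ 2 else 0)))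
          + (∑ a : I₁ → Bool, ∑ b : I₂ → Bool,
            ((if g₁ a = true then 2 * (Λ₂/Λ)^2 * v₁ a ^ 2 else 0) *
              (if g₂ b = false then v₂ b ^ 2 else 0))) := by
          rw [← Finset.sum_add_distrib]
          refine Finset.sum_congr rfl fun a _ => ?_
          rw [← Finset.sum_add_distrib]
          exact Finset.sum_congr rfl fun b _ => point a b
    _ = (∑ a : I₁ → Bool, (if g₁ a = false then 2 * (Λ₁/Λ)^2 * v₁ a ^ 2 else 0)) *
          (∑ b : I₂ → Bool, (if g₂ b = true then v₂ b ^ 2 else 0))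
        + (∑ a : I₁ → Bool, (if g₁ a = true then 2 * (Λ₂/Λ)^2 * v₁ a ^ 2 else 0)) *
          (∑ b : I₂ → Bool, (if g₂ b = false then v₂ b ^ 2 else 0)) := by
          rw [Finset.sum_mul_sum, Finset.sum_mul_sum]
    _ = (2 * (Λ₁/Λ)^2 * (1/2)) * (1/2) + (2 * (Λ₂/Λ)^2 * (1/2)) * (1/2) := by
          rw [hm₂t, hm₂f]
          congr 2
          · have : (∑ a : I₁ → Bool, (if g₁ a = false then 2 * (Λ₁/Λ)^2 * v₁ a ^ 2 else 0))
                = 2 * (Λ₁/Λ)^2 * ∑ a : I₁ → Bool, (if g₁ a = false then v₁ a ^ 2 else 0) := by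
              rw [Finset.mul_sum]
              exact Finset.sum_congr rfl fun a _ => by split <;> ring
            rw [this, hm₁f]
          · have : (∑ a : I₁ → Bool, (if g₁ a = true then 2 * (Λ₂/Λ)^2 * v₁ a ^ 2 else 0))
                = 2 * (Λ₂/Λ)^2 * ∑ a : I₁ → Bool, (if g₁ a = true then v₁ a ^ 2 else 0) := by
              rw [Finset.mul_sum]
              exact Finset.sum_congr rfl fun a _ => by split <;> ring
            rw [this, hm₁t]
    _ = 1/2 := by
          field_simp
          linarith [hΛsq]

end AndLemma

section OrLemma

variable {I₁ I₂ : Type} [Fintype I₁] [Fintype I₂] [DecidableEq I₁] [DecidableEq I₂]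

lemma advInv_or {g₁ : (I₁ → Bool) → Bool} {g₂ : (I₂ → Bool) → Bool}
    (h₁ : AdvInv I₁ g₁) (h₂ : AdvInv I₂ g₂) :
    AdvInv (I₁ ⊕ I₂)
      (fun x => g₁ (fun i => x (Sum.inl i)) || g₂ (fun i => x (Sum.inr i))) := by
  have H : AdvInv (I₁ ⊕ I₂)
      (fun x => !((!g₁ (fun i => x (Sum.inl i))) && (!g₂ (fun i => x (Sum.inr i))))) :=
    advInv_neg (advInv_and (advInv_neg h₁) (advInv_neg h₂))
  have e : (fun x : I₁ ⊕ I₂ → Bool =>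
      !((!g₁ (fun i => x (Sum.inl i))) && (!g₂ (fun i => x (Sum.inr i)))))
      = fun x => g₁ (fun i => x (Sum.inl i)) || g₂ (fun i => x (Sum.inr i)) := by
    funext x
    cases hg1 : g₁ (fun i => x (Sum.inl i)) <;> cases hg2 : g₂ (fun i => x (Sum.inr i)) <;>
      simp [hg1, hg2]
  rw [e] at H
  exact H

end OrLemma

lemma advInv_negvar : AdvInv Unit (fun x => !x ()) := advInv_neg advInv_var

lemma readOnce_advInv {I : Type} [Fintype I] {g : (I → Bool) → Bool}
    (h : ReadOnce I g) : ∀ (d : DecidableEq I), @AdvInv I _ d g := by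
  induction h with
  | var =>
      intro d
      exact advInv_irrel advInv_var
  | negvar =>
      intro d
      exact advInv_irrel advInv_negvar
  | @and I₁ I₂ inst1 inst2 g₁ g₂ h1 h2 ih1 ih2 =>
      intro d
      letI dd1 := Classical.decEq I₁
      letI dd2 := Classical.decEq I₂
      exact advInv_irrel (advInv_and (ih1 dd1) (ih2 dd2))
  | @or I₁ I₂ inst1 inst2 g₁ g₂ h1 h2 ih1 ih2 =>
      intro d
      letI dd1 := Classical.decEq I₁
      letI dd2 := Classical.decEq I₂
      exact advInv_irrel (advInv_or (ih1 dd1) (ih2 dd2))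

theorem stmt14
    {I : Type} [Fintype I] [DecidableEq I]
    (h : (I → Bool) → Bool) (hro : ReadOnce I h) :
    Real.sqrt (Fintype.card I) ≤ ADV h := by
  obtain ⟨Γr, v, Λ, hsym, hnn, hle1, hzero, hone, hvnn, heig, hΛpos, hΛge, hm1, hm0⟩ :=
    readOnce_advInv hro inferInstance
  set Γ : Matrix (I → Bool) (I → Bool) ℂ :=
    Matrix.of fun x y => ((Γr x y : ℝ) : ℂ) with hΓdef
  -- total mass of v is one
  have hv1 : (∑ x : I → Bool, v x ^ 2) = 1 := by
    have hp : ∀ x : I → Bool, v x ^ 2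
        = (if h x = true then v x ^ 2 else 0) + (if h x = false then v x ^ 2 else 0) := by
      intro x; cases hx : h x <;> simp [hx]
    rw [Finset.sum_congr rfl fun x _ => hp x, Finset.sum_add_distrib, hm1, hm0]
    norm_num
  -- complex eigen equation
  have heigC : ∀ x : I → Bool, Γ.mulVec (fun y => ((v y : ℝ) : ℂ)) x = ((Λ * v x : ℝ) : ℂ) := by
    intro x
    have hr : (Γr.mulVec v) x = Λ * v x := by rw [heig]; simp
    rw [Matrix.mulVec, dotProduct] at hr ⊢
    rw [← hr]
    push_cast
    rfl
  -- Λ ≤ specNorm Γ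
  have hspec : Λ ≤ specNorm Γ := by
    have hb := le_specNorm Γ (fun y => ((v y : ℝ) : ℂ))
    have e1 : (∑ x : I → Bool, ‖Γ.mulVec (fun y => ((v y : ℝ) : ℂ)) x‖ ^ 2) = Λ ^ 2 := by
      have : ∀ x : I → Bool, ‖Γ.mulVec (fun y => ((v y : ℝ) : ℂ)) x‖ ^ 2
          = Λ ^ 2 * v x ^ 2 := by
        intro x
        rw [heigC x, Complex.norm_real, Real.norm_eq_abs, sq_abs]
        ring
      rw [Finset.sum_congr rfl fun x _ => this x, ← Finset.mul_sum, hv1, mul_one]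
    have e2 : (∑ x : I → Bool, ‖((v x : ℝ) : ℂ)‖ ^ 2) = 1 := by
      have : ∀ x : I → Bool, ‖((v x : ℝ) : ℂ)‖ ^ 2 = v x ^ 2 := by
        intro x; rw [Complex.norm_real, Real.norm_eq_abs, sq_abs]
      rw [Finset.sum_congr rfl fun x _ => this x, hv1]
    rw [e1, e2, Real.sqrt_one, mul_one, Real.sqrt_sq hΛpos.le] at hb
    exact hb
  -- a nonzero entry of Γr
  obtain ⟨x₀, hx₀⟩ : ∃ x : I → Bool, v x ≠ 0 := by
    by_contra hall
    push_neg at hall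
    have : (∑ x : I → Bool, v x ^ 2) = 0 :=
      Finset.sum_eq_zero fun x _ => by rw [hall x]; ring
    rw [hv1] at this; norm_num at this
  have hΓv : (Γr.mulVec v) x₀ ≠ 0 := by
    rw [heig]
    simp only [Pi.smul_apply, smul_eq_mul]
    exact mul_ne_zero (ne_of_gt hΛpos) hx₀
  obtain ⟨y₀, hy₀⟩ : ∃ y : I → Bool, Γr x₀ y * v y ≠ 0 := by
    by_contra hall
    push_neg at hall
    exact hΓv (Finset.sum_eq_zero fun y _ => hall y)
  have hΓxy : Γr x₀ y₀ ≠ 0 := fun h0 => hy₀ (by rw [h0, zero_mul])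
  obtain ⟨i₀, hi₀, hoth₀⟩ := hone _ _ hΓxy
  haveI : Nonempty I := ⟨i₀⟩
  -- flip involutions
  have flipInv : ∀ i : I, Function.Involutive
      (fun x : I → Bool => Function.update x i (!x i)) := by
    intro i x
    funext k
    by_cases hk : k = i
    · subst hk
      simp [Function.update_self]
    · simp [Function.update_of_ne hk]
  -- each hadamard product has small norm
  have hDle : ∀ i : I, specNorm (Γ ⊙ Dmat i) ≤ 1 := by
    intro i
    apply specNorm_le_one_of_matching _ ((flipInv i).toPerm)
    · intro x y hxy0
      have hne : Γr x y ≠ 0 ∧ x i ≠ y i := by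
        constructor
        · intro h0
          apply hxy0
          simp [Matrix.hadamard_apply, hΓdef, h0, Dmat]
        · intro h0
          apply hxy0
          simp [Matrix.hadamard_apply, hΓdef, Dmat, h0]
      obtain ⟨j, hj, hothj⟩ := hone _ _ hne.1
      have hji : j = i := by
        by_contra hne'
        exact hne.2 (hothj i (fun e => hne' e.symm))
      subst hji
      have : y = Function.update x j (!x j) := by
        funext k
        by_cases hk : k = j
        · subst hk
          rw [Function.update_self]
          revert hj
          cases x k <;> cases y k <;> simp
        · rw [Function.update_of_ne hk]
          exact (hothj k hk).symm
      rw [this]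
      rfl
    · intro x y
      rw [Matrix.hadamard_apply]
      calc ‖Γ x y * Dmat i x y‖ = ‖Γ x y‖ * ‖Dmat i x y‖ := norm_mul _ _
      _ ≤ 1 * 1 := by
          apply mul_le_mul ?_ ?_ (norm_nonneg _) zero_le_one
          · rw [hΓdef]
            simp only [Matrix.of_apply, Complex.norm_real, Real.norm_eq_abs]
            rw [abs_of_nonneg (hnn x y)]
            exact hle1 x y
          · unfold Dmat
            simp only [Matrix.of_apply]
            split <;> simp
      _ = 1 := by norm_num
  set S : ℝ := ⨆ i : I, specNorm (Γ ⊙ Dmat i) with hSdef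
  have hbddS : BddAbove (Set.range fun i : I => specNorm (Γ ⊙ Dmat i)) :=
    Set.Finite.bddAbove (Set.finite_range _)
  have hSle1 : S ≤ 1 := ciSup_le hDle
  have hSpos : 0 < S := by
    have hE : (Γ ⊙ Dmat i₀) x₀ y₀ = ((Γr x₀ y₀ : ℝ) : ℂ) := by
      rw [Matrix.hadamard_apply]
      have : Dmat i₀ x₀ y₀ = 1 := by unfold Dmat; simp [hi₀]
      rw [this, mul_one]
      rfl
    have h1 : (0:ℝ) < ‖(Γ ⊙ Dmat i₀) x₀ y₀‖ := by
      rw [hE, Complex.norm_real, Real.norm_eq_abs]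
      exact abs_pos.2 hΓxy
    calc (0:ℝ) < ‖(Γ ⊙ Dmat i₀) x₀ y₀‖ := h1
    _ ≤ specNorm (Γ ⊙ Dmat i₀) := entry_le_specNorm _ _ _
    _ ≤ S := le_ciSup hbddS i₀
  -- membership
  have hmem : specNorm Γ / S ∈ { r : ℝ | ∃ Γ : Matrix (I → Bool) (I → Bool) ℂ, Γ.IsHermitian ∧
      (∀ x y, h x = h y → Γ x y = 0) ∧
      (∀ x y, ∃ t : ℝ, 0 ≤ t ∧ Γ x y = (t : ℂ)) ∧ Γ ≠ 0 ∧
      r = specNorm Γ / ⨆ i : I, specNorm (Γ ⊙ Dmat i) } := by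
    refine ⟨Γ, ?_, ?_, ?_, ?_, rfl⟩
    · show Γ.conjTranspose = Γ
      ext x y
      rw [Matrix.conjTranspose_apply, hΓdef]
      simp only [Matrix.of_apply]
      rw [Complex.star_def, Complex.conj_ofReal, hsym y x]
    · intro x y hxy
      rw [hΓdef]
      simp only [Matrix.of_apply]
      rw [hzero x y hxy]
      norm_num
    · intro x y
      exact ⟨Γr x y, hnn x y, rfl⟩
    · intro h0
      apply hΓxy
      have := congrFun (congrFun h0 x₀) y₀
      rw [hΓdef] at this
      simp only [Matrix.of_apply, Matrix.zero_apply] at this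
      exact_mod_cast this
  -- the claimed lower bound on the ratio
  have hratio : Real.sqrt (Fintype.card I) ≤ specNorm Γ / S := by
    calc Real.sqrt (Fintype.card I) ≤ Λ := hΛge
    _ ≤ specNorm Γ := hspec
    _ ≤ specNorm Γ / S := by
        rw [le_div_iff₀ hSpos]
        exact mul_le_of_le_one_right (specNorm_nonneg _) hSle1
  -- boundedness of the ADV set
  have hbdd : BddAbove { r : ℝ | ∃ Γ : Matrix (I → Bool) (I → Bool) ℂ, Γ.IsHermitian ∧
      (∀ x y, h x = h y → Γ x y = 0) ∧
      (∀ x y, ∃ t : ℝ, 0 ≤ t ∧ Γ x y = (t : ℂ)) ∧ Γ ≠ 0 ∧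
      r = specNorm Γ / ⨆ i : I, specNorm (Γ ⊙ Dmat i) } := by
    refine ⟨(Fintype.card I : ℝ), fun r hr => ?_⟩
    obtain ⟨Γ', hherm', hzero', hent', hne', rfl⟩ := hr
    set S' : ℝ := ⨆ i : I, specNorm (Γ' ⊙ Dmat i) with hS'def
    have hbddS' : BddAbove (Set.range fun i : I => specNorm (Γ' ⊙ Dmat i)) :=
      Set.Finite.bddAbove (Set.finite_range _)
    have hS'0 : 0 ≤ S' :=
      le_trans (specNorm_nonneg (Γ' ⊙ Dmat i₀)) (le_ciSup hbddS' i₀)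
    rcases eq_or_lt_of_le hS'0 with hS'eq | hS'pos
    · rw [← hS'eq, div_zero]
      positivity
    · choose t ht0 hteq using hent'
      set Br : Matrix (I → Bool) (I → Bool) ℝ := Matrix.of fun x y =>
        t x y * ((Finset.univ.filter (fun i : I => x i ≠ y i)).card : ℝ) with hBrdef
      have hdom : specNorm Γ' ≤ specNorm (Br.map (fun s => (s : ℂ))) := by
        apply specNorm_le_of_dom
        intro x y
        rw [hteq x y, Complex.norm_real, Real.norm_eq_abs, abs_of_nonneg (ht0 x y), hBrdef]
        simp only [Matrix.of_apply]
        by_cases hxy : x = y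
        · have : Γ' x y = 0 := hzero' x y (by rw [hxy])
          have ht00 : t x y = 0 := by
            have := (hteq x y).symm.trans this
            exact_mod_cast this
          rw [ht00, zero_mul]
        · have : ∃ i, x i ≠ y i := Function.ne_iff.1 hxy
          obtain ⟨i, hi⟩ := this
          have hcard : 1 ≤ ((Finset.univ.filter (fun i : I => x i ≠ y i)).card : ℝ) := by
            have : 0 < (Finset.univ.filter (fun i : I => x i ≠ y i)).card :=
              Finset.card_pos.2 ⟨i, Finset.mem_filter.2 ⟨Finset.mem_univ i, hi⟩⟩
            exact_mod_cast this
          exact le_mul_of_one_le_right (ht0 x y) hcard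
      have hsum : Br.map (fun s => (s : ℂ)) = ∑ i : I, (Γ' ⊙ Dmat i) := by
        ext x y
        rw [Matrix.map_apply, hBrdef]
        simp only [Matrix.of_apply, Matrix.sum_apply, Matrix.hadamard_apply]
        have : ∀ i : I, Γ' x y * Dmat i x y
            = Γ' x y * (if x i ≠ y i then 1 else 0) := fun i => rfl
        rw [Finset.sum_congr rfl fun i _ => this i, ← Finset.mul_sum]
        rw [Finset.sum_boole]
        rw [hteq x y]
        push_cast
        ring
      have hchain : specNorm Γ' ≤ (Fintype.card I : ℝ) * S' := by
        calc specNorm Γ' ≤ specNorm (Br.map (fun s => (s : ℂ))) := hdom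
        _ = specNorm (∑ i : I, (Γ' ⊙ Dmat i)) := by rw [hsum]
        _ ≤ ∑ i : I, specNorm (Γ' ⊙ Dmat i) := specNorm_sum_le _ _
        _ ≤ ∑ _i : I, S' := Finset.sum_le_sum fun i _ => le_ciSup hbddS' i
        _ = (Fintype.card I : ℝ) * S' := by
            rw [Finset.sum_const, nsmul_eq_mul]
            rfl
      rw [div_le_iff₀ hS'pos]
      exact hchain
  exact le_trans hratio (le_csSup hbdd hmem)
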